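/- Let a, Lambda, m, q, Qc, r, ftilde be real numbers with Lambda*a^2 > -3 and r^2 + a^2 ≠ 0. Set Delta_theta(theta) := 1 + (Lambda*a^2/3)*cos^2(theta), lambda := 1 + Lambda*a^2/3, and define the following operators on smooth functions psi : ℝ × (0,π) × ℝ → ℂ^4 (coordinates (x, theta, phi), D_x := -i∂_x, D_phi := -i∂_phi): slD psi := i*Gamma_x*(∂_theta psi + (cot(theta)/2)*psi) - i*Gamma_y*(1/sin(theta))*∂_phi psi; H_1 psi := Gamma_x*(i*Delta_theta'/(4*sqrt(Delta_theta)))*psi + Gamma_y*(a*sin(theta)/sqrt(Delta_theta))*( lambda*D_x psi + (Lambda*a/3)*D_phi psi ); slcalD psi := sqrt(Delta_theta)*slD psi + H_1 psi; M_0 psi := i*m*r*M_- psi + m*a*cos(theta)*M_+ psi; H_0 psi := -Gamma_z*( D_x psi + (a/(r^2+a^2))*D_phi psi - (q*Qc*r/(r^2+a^2))*psi ); H psi := H_0 psi + ftilde*( slcalD psi + M_0 psi ); and the second-order symmetry operator Q psi := (slcalD + m*a*cos(theta)*M_+)( (slcalD + m*a*cos(theta)*M_+) psi ). Then Q commutes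 with the Hamiltonian H: for every smooth psi : ℝ × (0,π) × ℝ → ℂ^4, Q(H psi) = H(Q psi). -/

import Mathlib

noncomputable section

open Complex

/-- `Γ_x = diag(σ_x, -σ_x)`. -/
def GammaX : Matrix (Fin 4) (Fin 4) ℂ :=
  !![0, 1, 0, 0; 1, 0, 0, 0; 0, 0, 0, -1; 0, 0, -1, 0]

/-- `Γ_y = diag(σ_y, -σ_y)`. -/
def GammaY : Matrix (Fin 4) (Fin 4) ℂ :=
  !![0, -I, 0, 0; I, 0, 0, 0; 0, 0, 0, I; 0, 0, -I, 0]

/-- `Γ_z = diag(σ_z, -σ_z)`. -/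
def GammaZ : Matrix (Fin 4) (Fin 4) ℂ :=
  !![1, 0, 0, 0; 0, -1, 0, 0; 0, 0, -1, 0; 0, 0, 0, 1]

/-- `M_+ = [[0, I₂],[I₂, 0]]`. -/
def Mplus : Matrix (Fin 4) (Fin 4) ℂ :=
  !![0, 0, 1, 0; 0, 0, 0, 1; 1, 0, 0, 0; 0, 1, 0, 0]

/-- `M_- = [[0, I₂],[-I₂, 0]]`. -/
def Mminus : Matrix (Fin 4) (Fin 4) ℂ :=
  !![0, 0, 1, 0; 0, 0, 0, 1; -1, 0, 0, 0; 0, -1, 0, 0]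

/-- Partial derivative in the first variable `x`. -/
def pdX (psi : ℝ × ℝ × ℝ → Fin 4 → ℂ) (p : ℝ × ℝ × ℝ) : Fin 4 → ℂ :=
  deriv (fun t : ℝ => psi (t, p.2.1, p.2.2)) p.1

/-- Partial derivative in the second variable `θ`. -/
def pdT (psi : ℝ × ℝ × ℝ → Fin 4 → ℂ) (p : ℝ × ℝ × ℝ) : Fin 4 → ℂ :=
  deriv (fun t : ℝ => psi (p.1, t, p.2.2)) p.2.1

/-- Partial derivative in the third variable `φ`. -/
def pdP (psi : ℝ × ℝ × ℝ → Fin 4 → ℂ) (p : ℝ × ℝ × ℝ) : Fin 4 → ℂ :=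
  deriv (fun t : ℝ => psi (p.1, p.2.1, t)) p.2.2

/-- `D_x = -i ∂_x`. -/
def DX (psi : ℝ × ℝ × ℝ → Fin 4 → ℂ) (p : ℝ × ℝ × ℝ) : Fin 4 → ℂ := (-I) • pdX psi p

/-- `D_φ = -i ∂_φ`. -/
def DP (psi : ℝ × ℝ × ℝ → Fin 4 → ℂ) (p : ℝ × ℝ × ℝ) : Fin 4 → ℂ := (-I) • pdP psi p

/-- `Δ_θ(θ) = 1 + (Λ a²/3) cos² θ`. -/
def DeltaTheta (a Λ θ : ℝ) : ℝ := 1 + Λ * a ^ 2 / 3 * Real.cos θ ^ 2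

/-- The Dirac operator `slD` on the 2-sphere acting on bispinors. -/
def slD (psi : ℝ × ℝ × ℝ → Fin 4 → ℂ) (p : ℝ × ℝ × ℝ) : Fin 4 → ℂ :=
  I • GammaX.mulVec
      (pdT psi p + ((Real.cos p.2.1 / Real.sin p.2.1 / 2 : ℝ) : ℂ) • psi p) -
    I • GammaY.mulVec ((((Real.sin p.2.1)⁻¹ : ℝ) : ℂ) • pdP psi p)

/-- The operator `H₁`. -/
def H1op (a Λ : ℝ) (psi : ℝ × ℝ × ℝ → Fin 4 → ℂ) (p : ℝ × ℝ × ℝ) : Fin 4 → ℂ :=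
  GammaX.mulVec
      ((I * ((deriv (DeltaTheta a Λ) p.2.1 /
          (4 * Real.sqrt (DeltaTheta a Λ p.2.1)) : ℝ) : ℂ)) • psi p) +
    GammaY.mulVec
      (((a * Real.sin p.2.1 / Real.sqrt (DeltaTheta a Λ p.2.1) : ℝ) : ℂ) •
        (((1 + Λ * a ^ 2 / 3 : ℝ) : ℂ) • DX psi p + ((Λ * a / 3 : ℝ) : ℂ) • DP psi p))

/-- The angular operator `slcalD = √Δ_θ slD + H₁`. -/
def slcalD (a Λ : ℝ) (psi : ℝ × ℝ × ℝ → Fin 4 → ℂ) (p : ℝ × ℝ × ℝ) : Fin 4 → ℂ :=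
  ((Real.sqrt (DeltaTheta a Λ p.2.1) : ℝ) : ℂ) • slD psi p + H1op a Λ psi p

/-- The mass matrix term `M₀ = i m r M_- + m a cosθ M_+`. -/
def M0op (m a r : ℝ) (psi : ℝ × ℝ × ℝ → Fin 4 → ℂ) (p : ℝ × ℝ × ℝ) : Fin 4 → ℂ :=
  (I * ((m * r : ℝ) : ℂ)) • Mminus.mulVec (psi p) +
    ((m * a * Real.cos p.2.1 : ℝ) : ℂ) • Mplus.mulVec (psi p)

/-- The operator `H₀`. -/
def H0op (a q Qc r : ℝ) (psi : ℝ × ℝ × ℝ → Fin 4 → ℂ) (p : ℝ × ℝ × ℝ) : Fin 4 → ℂ :=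
  -GammaZ.mulVec
      (DX psi p + ((a / (r ^ 2 + a ^ 2) : ℝ) : ℂ) • DP psi p -
        ((q * Qc * r / (r ^ 2 + a ^ 2) : ℝ) : ℂ) • psi p)

/-- The (fixed-time) interior Dirac Hamiltonian `H = H₀ + f̃ (slcalD + M₀)`. -/
def Hop (a Λ m q Qc r ftilde : ℝ) (psi : ℝ × ℝ × ℝ → Fin 4 → ℂ)
    (p : ℝ × ℝ × ℝ) : Fin 4 → ℂ :=
  H0op a q Qc r psi p + ((ftilde : ℝ) : ℂ) • (slcalD a Λ psi p + M0op m a r psi p)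

/-- The first-order operator `A = slcalD + m a cosθ M_+`. -/
def Aop (a Λ m : ℝ) (psi : ℝ × ℝ × ℝ → Fin 4 → ℂ) (p : ℝ × ℝ × ℝ) : Fin 4 → ℂ :=
  slcalD a Λ psi p + ((m * a * Real.cos p.2.1 : ℝ) : ℂ) • Mplus.mulVec (psi p)

/-- The second-order symmetry operator `Q = (slcalD + m a cosθ M_+)²`. -/
def Qop (a Λ m : ℝ) (psi : ℝ × ℝ × ℝ → Fin 4 → ℂ) : ℝ × ℝ × ℝ → Fin 4 → ℂ :=
  Aop a Λ m (Aop a Λ m psi)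

/-! ### Auxiliary development for the proof -/

namespace Stmt17

abbrev E4 := Fin 4 → ℂ
abbrev UU : Set (ℝ × ℝ × ℝ) := (Set.univ : Set ℝ) ×ˢ Set.Ioo 0 Real.pi ×ˢ (Set.univ : Set ℝ)

lemma isOpen_UU : IsOpen UU := isOpen_univ.prod (isOpen_Ioo.prod isOpen_univ)

variable {a Λ m q Qc r : ℝ} {f g : ℝ × ℝ × ℝ → E4} {p : ℝ × ℝ × ℝ}

/-! #### Slice derivatives -/

lemma hasDerivAt_sliceX (hf : DifferentiableAt ℝ f p) :
    HasDerivAt (fun t => f (t, p.2.1, p.2.2)) (fderiv ℝ f p (1, 0, 0)) p.1 := by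
  have h : HasDerivAt (fun t : ℝ => (t, p.2.1, p.2.2)) ((1 : ℝ), (0 : ℝ), (0 : ℝ)) p.1 :=
    HasDerivAt.prodMk (hasDerivAt_id p.1) (hasDerivAt_const p.1 (p.2.1, p.2.2))
  simpa [Function.comp_def] using hf.hasFDerivAt.comp_hasDerivAt p.1 h

lemma hasDerivAt_sliceT (hf : DifferentiableAt ℝ f p) :
    HasDerivAt (fun t => f (p.1, t, p.2.2)) (fderiv ℝ f p (0, 1, 0)) p.2.1 := by
  have h : HasDerivAt (fun t : ℝ => (p.1, t, p.2.2)) ((0 : ℝ), (1 : ℝ), (0 : ℝ)) p.2.1 :=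
    HasDerivAt.prodMk (hasDerivAt_const p.2.1 p.1) (HasDerivAt.prodMk (hasDerivAt_id p.2.1) (hasDerivAt_const p.2.1 p.2.2))
  simpa [Function.comp_def] using hf.hasFDerivAt.comp_hasDerivAt p.2.1 h

lemma hasDerivAt_sliceP (hf : DifferentiableAt ℝ f p) :
    HasDerivAt (fun t => f (p.1, p.2.1, t)) (fderiv ℝ f p (0, 0, 1)) p.2.2 := by
  have h : HasDerivAt (fun t : ℝ => (p.1, p.2.1, t)) ((0 : ℝ), (0 : ℝ), (1 : ℝ)) p.2.2 :=
    HasDerivAt.prodMk (hasDerivAt_const p.2.2 p.1) (HasDerivAt.prodMk (hasDerivAt_const p.2.2 p.2.1) (hasDerivAt_id p.2.2))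
  simpa [Function.comp_def] using hf.hasFDerivAt.comp_hasDerivAt p.2.2 h

lemma pdX_eq (hf : DifferentiableAt ℝ f p) : pdX f p = fderiv ℝ f p (1, 0, 0) :=
  (hasDerivAt_sliceX hf).deriv

lemma pdT_eq (hf : DifferentiableAt ℝ f p) : pdT f p = fderiv ℝ f p (0, 1, 0) :=
  (hasDerivAt_sliceT hf).deriv

lemma pdP_eq (hf : DifferentiableAt ℝ f p) : pdP f p = fderiv ℝ f p (0, 0, 1) :=
  (hasDerivAt_sliceP hf).deriv

lemma hasDerivAt_pdX (hf : DifferentiableAt ℝ f p) :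
    HasDerivAt (fun t => f (t, p.2.1, p.2.2)) (pdX f p) p.1 := by
  rw [pdX_eq hf]; exact hasDerivAt_sliceX hf

lemma hasDerivAt_pdT (hf : DifferentiableAt ℝ f p) :
    HasDerivAt (fun t => f (p.1, t, p.2.2)) (pdT f p) p.2.1 := by
  rw [pdT_eq hf]; exact hasDerivAt_sliceT hf

lemma hasDerivAt_pdP (hf : DifferentiableAt ℝ f p) :
    HasDerivAt (fun t => f (p.1, p.2.1, t)) (pdP f p) p.2.2 := by
  rw [pdP_eq hf]; exact hasDerivAt_sliceP hf

/-! #### Pointwise linearity of the partial derivatives -/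

def mulVecCLM (M : Matrix (Fin 4) (Fin 4) ℂ) : E4 →L[ℝ] E4 :=
  LinearMap.toContinuousLinearMap ((Matrix.mulVecLin M).restrictScalars ℝ)

@[simp] lemma mulVecCLM_apply (M : Matrix (Fin 4) (Fin 4) ℂ) (v : E4) :
    mulVecCLM M v = M.mulVec v := rfl

lemma pdX_add (hf : DifferentiableAt ℝ f p) (hg : DifferentiableAt ℝ g p) :
    pdX (fun z => f z + g z) p = pdX f p + pdX g p :=
  ((hasDerivAt_pdX hf).add (hasDerivAt_pdX hg)).deriv

lemma pdT_add (hf : DifferentiableAt ℝ f p) (hg : DifferentiableAt ℝ g p) :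
    pdT (fun z => f z + g z) p = pdT f p + pdT g p :=
  ((hasDerivAt_pdT hf).add (hasDerivAt_pdT hg)).deriv

lemma pdP_add (hf : DifferentiableAt ℝ f p) (hg : DifferentiableAt ℝ g p) :
    pdP (fun z => f z + g z) p = pdP f p + pdP g p :=
  ((hasDerivAt_pdP hf).add (hasDerivAt_pdP hg)).deriv

lemma pdX_smul (c : ℂ) (hf : DifferentiableAt ℝ f p) :
    pdX (fun z => c • f z) p = c • pdX f p :=
  ((hasDerivAt_pdX hf).const_smul c).deriv

lemma pdT_smul (c : ℂ) (hf : DifferentiableAt ℝ f p) :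
    pdT (fun z => c • f z) p = c • pdT f p :=
  ((hasDerivAt_pdT hf).const_smul c).deriv

lemma pdP_smul (c : ℂ) (hf : DifferentiableAt ℝ f p) :
    pdP (fun z => c • f z) p = c • pdP f p :=
  ((hasDerivAt_pdP hf).const_smul c).deriv

lemma pdX_neg (hf : DifferentiableAt ℝ f p) :
    pdX (fun z => -(f z)) p = -(pdX f p) := (hasDerivAt_pdX hf).neg.deriv

lemma pdT_neg (hf : DifferentiableAt ℝ f p) :
    pdT (fun z => -(f z)) p = -(pdT f p) := (hasDerivAt_pdT hf).neg.deriv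

lemma pdP_neg (hf : DifferentiableAt ℝ f p) :
    pdP (fun z => -(f z)) p = -(pdP f p) := (hasDerivAt_pdP hf).neg.deriv

lemma pdX_mulVec (M : Matrix (Fin 4) (Fin 4) ℂ) (hf : DifferentiableAt ℝ f p) :
    pdX (fun z => M.mulVec (f z)) p = M.mulVec (pdX f p) := by
  exact ((mulVecCLM M).hasFDerivAt.comp_hasDerivAt p.1 (hasDerivAt_pdX hf)).deriv

lemma pdT_mulVec (M : Matrix (Fin 4) (Fin 4) ℂ) (hf : DifferentiableAt ℝ f p) :
    pdT (fun z => M.mulVec (f z)) p = M.mulVec (pdT f p) := by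
  exact ((mulVecCLM M).hasFDerivAt.comp_hasDerivAt p.2.1 (hasDerivAt_pdT hf)).deriv

lemma pdP_mulVec (M : Matrix (Fin 4) (Fin 4) ℂ) (hf : DifferentiableAt ℝ f p) :
    pdP (fun z => M.mulVec (f z)) p = M.mulVec (pdP f p) := by
  exact ((mulVecCLM M).hasFDerivAt.comp_hasDerivAt p.2.2 (hasDerivAt_pdP hf)).deriv

lemma pdX_coef (c : ℝ → ℂ) (hf : DifferentiableAt ℝ f p) :
    pdX (fun z => c z.2.1 • f z) p = c p.2.1 • pdX f p :=
  ((hasDerivAt_pdX hf).const_smul (c p.2.1)).deriv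

lemma pdP_coef (c : ℝ → ℂ) (hf : DifferentiableAt ℝ f p) :
    pdP (fun z => c z.2.1 • f z) p = c p.2.1 • pdP f p :=
  ((hasDerivAt_pdP hf).const_smul (c p.2.1)).deriv

/-! #### Locality -/

lemma pdX_congr (h : f =ᶠ[nhds p] g) : pdX f p = pdX g p := by
  apply Filter.EventuallyEq.deriv_eq
  have hc : Filter.Tendsto (fun t : ℝ => (t, p.2.1, p.2.2)) (nhds p.1) (nhds p) := by
    have : Filter.Tendsto (fun t : ℝ => (t, p.2.1, p.2.2)) (nhds p.1)
        (nhds (p.1, p.2.1, p.2.2)) := (continuous_id.prodMk continuous_const).tendsto p.1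
    simpa using this
  exact h.comp_tendsto hc

lemma pdT_congr (h : f =ᶠ[nhds p] g) : pdT f p = pdT g p := by
  apply Filter.EventuallyEq.deriv_eq
  have hc : Filter.Tendsto (fun t : ℝ => (p.1, t, p.2.2)) (nhds p.2.1) (nhds p) := by
    have : Filter.Tendsto (fun t : ℝ => (p.1, t, p.2.2)) (nhds p.2.1)
        (nhds (p.1, p.2.1, p.2.2)) :=
      (continuous_const.prodMk (continuous_id.prodMk continuous_const)).tendsto p.2.1
    simpa using this
  exact h.comp_tendsto hc

lemma pdP_congr (h : f =ᶠ[nhds p] g) : pdP f p = pdP g p := by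
  apply Filter.EventuallyEq.deriv_eq
  have hc : Filter.Tendsto (fun t : ℝ => (p.1, p.2.1, t)) (nhds p.2.2) (nhds p) := by
    have : Filter.Tendsto (fun t : ℝ => (p.1, p.2.1, t)) (nhds p.2.2)
        (nhds (p.1, p.2.1, p.2.2)) :=
      (continuous_const.prodMk (continuous_const.prodMk continuous_id)).tendsto p.2.2
    simpa using this
  exact h.comp_tendsto hc

/-! #### Smoothness on the strip -/

def Sm (f : ℝ × ℝ × ℝ → E4) : Prop := ContDiffOn ℝ (⊤ : ℕ∞) f UU

lemma Sm.diffAt (hf : Sm f) (hp : p ∈ UU) : DifferentiableAt ℝ f p :=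
  (hf.differentiableOn (by simp)).differentiableAt (isOpen_UU.mem_nhds hp)

lemma Sm.fderiv_smooth (hf : Sm f) : ContDiffOn ℝ (⊤ : ℕ∞) (fun z => fderiv ℝ f z) UU :=
  hf.fderiv_of_isOpen isOpen_UU (by simp)

lemma Sm.fderiv_diffAt (hf : Sm f) (hp : p ∈ UU) :
    DifferentiableAt ℝ (fun z => fderiv ℝ f z) p :=
  ((hf.fderiv_smooth).differentiableOn (by simp)).differentiableAt (isOpen_UU.mem_nhds hp)

lemma pd_ev_X (hf : Sm f) (hp : p ∈ UU) :
    pdX f =ᶠ[nhds p] fun z => fderiv ℝ f z (1, 0, 0) := by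
  filter_upwards [isOpen_UU.mem_nhds hp] with z hz
  exact pdX_eq (hf.diffAt hz)

lemma pd_ev_T (hf : Sm f) (hp : p ∈ UU) :
    pdT f =ᶠ[nhds p] fun z => fderiv ℝ f z (0, 1, 0) := by
  filter_upwards [isOpen_UU.mem_nhds hp] with z hz
  exact pdT_eq (hf.diffAt hz)

lemma pd_ev_P (hf : Sm f) (hp : p ∈ UU) :
    pdP f =ᶠ[nhds p] fun z => fderiv ℝ f z (0, 0, 1) := by
  filter_upwards [isOpen_UU.mem_nhds hp] with z hz
  exact pdP_eq (hf.diffAt hz)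

lemma Sm.pdX (hf : Sm f) : Sm (pdX f) := by
  apply ContDiffOn.congr
    (f := fun z => (ContinuousLinearMap.apply ℝ E4 ((1:ℝ),(0:ℝ),(0:ℝ))) (fderiv ℝ f z))
  · exact (ContinuousLinearMap.apply ℝ E4 ((1:ℝ),(0:ℝ),(0:ℝ))).contDiff.comp_contDiffOn
      hf.fderiv_smooth
  · intro z hz; simpa using pdX_eq (hf.diffAt hz)

lemma Sm.pdT (hf : Sm f) : Sm (pdT f) := by
  apply ContDiffOn.congr
    (f := fun z => (ContinuousLinearMap.apply ℝ E4 ((0:ℝ),(1:ℝ),(0:ℝ))) (fderiv ℝ f z))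
  · exact (ContinuousLinearMap.apply ℝ E4 ((0:ℝ),(1:ℝ),(0:ℝ))).contDiff.comp_contDiffOn
      hf.fderiv_smooth
  · intro z hz; simpa using pdT_eq (hf.diffAt hz)

lemma Sm.pdP (hf : Sm f) : Sm (pdP f) := by
  apply ContDiffOn.congr
    (f := fun z => (ContinuousLinearMap.apply ℝ E4 ((0:ℝ),(0:ℝ),(1:ℝ))) (fderiv ℝ f z))
  · exact (ContinuousLinearMap.apply ℝ E4 ((0:ℝ),(0:ℝ),(1:ℝ))).contDiff.comp_contDiffOn
      hf.fderiv_smooth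
  · intro z hz; simpa using pdP_eq (hf.diffAt hz)

lemma Sm.add (hf : Sm f) (hg : Sm g) : Sm (fun z => f z + g z) := ContDiffOn.add hf hg

lemma Sm.neg (hf : Sm f) : Sm (fun z => -(f z)) := ContDiffOn.neg hf

lemma Sm.csmul (c : ℂ) (hf : Sm f) : Sm (fun z => c • f z) :=
  (contDiff_const_smul c).comp_contDiffOn hf

lemma Sm.mulVec (M : Matrix (Fin 4) (Fin 4) ℂ) (hf : Sm f) :
    Sm (fun z => M.mulVec (f z)) := by
  exact (mulVecCLM M).contDiff.comp_contDiffOn (s := UU) hf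

lemma Sm.coef (c : ℝ → ℂ) (hc : ContDiffOn ℝ (⊤ : ℕ∞) c (Set.Ioo 0 Real.pi)) (hf : Sm f) :
    Sm (fun z => c z.2.1 • f z) := by
  have hproj : ContDiff ℝ (⊤ : ℕ∞) (fun z : ℝ × ℝ × ℝ => z.2.1) := contDiff_snd.fst
  have hcc : ContDiffOn ℝ (⊤ : ℕ∞) (fun z : ℝ × ℝ × ℝ => c z.2.1) UU :=
    hc.comp hproj.contDiffOn (fun z hz => by
      simp only [UU, Set.mem_prod] at hz; exact hz.2.1)
  rw [Sm, contDiffOn_pi]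
  intro i
  exact hcc.mul ((contDiffOn_pi.1 hf) i)

/-! #### Symmetry of second derivatives -/

lemma sndDeriv_symm (hf : Sm f) (hp : p ∈ UU) (v w : ℝ × ℝ × ℝ) :
    fderiv ℝ (fderiv ℝ f) p v w = fderiv ℝ (fderiv ℝ f) p w v := by
  have h : ContDiffAt ℝ 2 f p := (hf.contDiffAt (isOpen_UU.mem_nhds hp)).of_le (WithTop.coe_le_coe.2 le_top)
  exact (h.isSymmSndFDerivAt (by norm_num)) v w

lemma pdX_apply_fderiv (hf : Sm f) (hp : p ∈ UU) (v : ℝ × ℝ × ℝ) :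
    pdX (fun z => fderiv ℝ f z v) p = fderiv ℝ (fderiv ℝ f) p (1, 0, 0) v := by
  have h1 : DifferentiableAt ℝ (fun z => fderiv ℝ f z v) p :=
    (ContinuousLinearMap.apply ℝ E4 v).differentiableAt.comp p (hf.fderiv_diffAt hp)
  rw [pdX_eq h1]
  have := ((ContinuousLinearMap.apply ℝ E4 v).hasFDerivAt.comp p
    (hf.fderiv_diffAt hp).hasFDerivAt).fderiv
  rw [show (fun z => fderiv ℝ f z v) = (ContinuousLinearMap.apply ℝ E4 v) ∘
    (fun z => fderiv ℝ f z) from rfl, this]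
  rfl

lemma pdT_apply_fderiv (hf : Sm f) (hp : p ∈ UU) (v : ℝ × ℝ × ℝ) :
    pdT (fun z => fderiv ℝ f z v) p = fderiv ℝ (fderiv ℝ f) p (0, 1, 0) v := by
  have h1 : DifferentiableAt ℝ (fun z => fderiv ℝ f z v) p :=
    (ContinuousLinearMap.apply ℝ E4 v).differentiableAt.comp p (hf.fderiv_diffAt hp)
  rw [pdT_eq h1]
  have := ((ContinuousLinearMap.apply ℝ E4 v).hasFDerivAt.comp p
    (hf.fderiv_diffAt hp).hasFDerivAt).fderiv
  rw [show (fun z => fderiv ℝ f z v) = (ContinuousLinearMap.apply ℝ E4 v) ∘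
    (fun z => fderiv ℝ f z) from rfl, this]
  rfl

lemma pdP_apply_fderiv (hf : Sm f) (hp : p ∈ UU) (v : ℝ × ℝ × ℝ) :
    pdP (fun z => fderiv ℝ f z v) p = fderiv ℝ (fderiv ℝ f) p (0, 0, 1) v := by
  have h1 : DifferentiableAt ℝ (fun z => fderiv ℝ f z v) p :=
    (ContinuousLinearMap.apply ℝ E4 v).differentiableAt.comp p (hf.fderiv_diffAt hp)
  rw [pdP_eq h1]
  have := ((ContinuousLinearMap.apply ℝ E4 v).hasFDerivAt.comp p
    (hf.fderiv_diffAt hp).hasFDerivAt).fderiv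
  rw [show (fun z => fderiv ℝ f z v) = (ContinuousLinearMap.apply ℝ E4 v) ∘
    (fun z => fderiv ℝ f z) from rfl, this]
  rfl

lemma pdT_pdX (hf : Sm f) (hp : p ∈ UU) : pdT (pdX f) p = pdX (pdT f) p := by
  rw [pdT_congr (pd_ev_X hf hp), pdX_congr (pd_ev_T hf hp),
    pdT_apply_fderiv hf hp, pdX_apply_fderiv hf hp, sndDeriv_symm hf hp]

lemma pdT_pdP (hf : Sm f) (hp : p ∈ UU) : pdT (pdP f) p = pdP (pdT f) p := by
  rw [pdT_congr (pd_ev_P hf hp), pdP_congr (pd_ev_T hf hp),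
    pdT_apply_fderiv hf hp, pdP_apply_fderiv hf hp, sndDeriv_symm hf hp]

lemma pdP_pdX (hf : Sm f) (hp : p ∈ UU) : pdP (pdX f) p = pdX (pdP f) p := by
  rw [pdP_congr (pd_ev_X hf hp), pdX_congr (pd_ev_P hf hp),
    pdP_apply_fderiv hf hp, pdX_apply_fderiv hf hp, sndDeriv_symm hf hp]

/-! #### Positivity and coefficient smoothness -/

lemma DeltaTheta_pos (hLor : Λ * a ^ 2 > -3) (θ : ℝ) : 0 < DeltaTheta a Λ θ := by
  have h1 : Real.cos θ ^ 2 ≤ 1 := Real.cos_sq_le_one θ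
  have h2 : (0:ℝ) ≤ Real.cos θ ^ 2 := sq_nonneg _
  unfold DeltaTheta
  rcases le_or_gt 0 (Λ * a ^ 2) with h | h
  · nlinarith
  · nlinarith

lemma deriv_DeltaTheta (a Λ : ℝ) :
    deriv (DeltaTheta a Λ) = fun θ => Λ * a ^ 2 / 3 * (2 * Real.cos θ * (-Real.sin θ)) := by
  funext θ
  have h : HasDerivAt (DeltaTheta a Λ)
      (Λ * a ^ 2 / 3 * (2 * Real.cos θ * (-Real.sin θ))) θ := by
    have h1 : HasDerivAt (fun θ : ℝ => Real.cos θ ^ 2)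
        (2 * Real.cos θ ^ 1 * (-Real.sin θ)) θ := (Real.hasDerivAt_cos θ).pow 2
    have h2 := (h1.const_mul (Λ * a ^ 2 / 3)).const_add 1
    simpa [show DeltaTheta a Λ = fun θ => 1 + Λ * a ^ 2 / 3 * Real.cos θ ^ 2 from rfl, mul_comm, mul_assoc, mul_left_comm] using h2
  exact h.deriv

lemma contDiffOn_DeltaTheta (a Λ : ℝ) :
    ContDiffOn ℝ (⊤ : ℕ∞) (DeltaTheta a Λ) (Set.Ioo 0 Real.pi) := by
  have : ContDiff ℝ (⊤ : ℕ∞) (DeltaTheta a Λ) := by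
    unfold DeltaTheta
    exact contDiff_const.add (contDiff_const.mul (Real.contDiff_cos.pow 2))
  exact this.contDiffOn

lemma contDiffOn_sqrtDelta (hLor : Λ * a ^ 2 > -3) :
    ContDiffOn ℝ (⊤ : ℕ∞) (fun θ => Real.sqrt (DeltaTheta a Λ θ)) (Set.Ioo 0 Real.pi) := by
  intro θ hθ
  exact ((contDiffOn_DeltaTheta a Λ θ hθ).contDiffAt
    ((isOpen_Ioo).mem_nhds hθ)).sqrt (ne_of_gt (DeltaTheta_pos hLor θ)) |>.contDiffWithinAt

lemma sqrtDelta_ne (hLor : Λ * a ^ 2 > -3) (θ : ℝ) :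
    Real.sqrt (DeltaTheta a Λ θ) ≠ 0 :=
  ne_of_gt (Real.sqrt_pos.2 (DeltaTheta_pos hLor θ))

lemma sin_ne_of_mem {θ : ℝ} (hθ : θ ∈ Set.Ioo 0 Real.pi) : Real.sin θ ≠ 0 :=
  ne_of_gt (Real.sin_pos_of_pos_of_lt_pi hθ.1 hθ.2)

lemma contDiffOn_ofReal {c : ℝ → ℝ} {s : Set ℝ} (hc : ContDiffOn ℝ (⊤ : ℕ∞) c s) :
    ContDiffOn ℝ (⊤ : ℕ∞) (fun θ => ((c θ : ℝ) : ℂ)) s :=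
  Complex.ofRealCLM.contDiff.comp_contDiffOn hc

/-! #### Canonical form of the angular operator -/

def cT (a Λ : ℝ) (θ : ℝ) : ℂ := I * ((Real.sqrt (DeltaTheta a Λ θ) : ℝ) : ℂ)
def c0x (a Λ : ℝ) (θ : ℝ) : ℂ :=
  I * ((Real.sqrt (DeltaTheta a Λ θ) * (Real.cos θ / Real.sin θ / 2) : ℝ) : ℂ) +
    I * ((deriv (DeltaTheta a Λ) θ / (4 * Real.sqrt (DeltaTheta a Λ θ)) : ℝ) : ℂ)
def cP (a Λ : ℝ) (θ : ℝ) : ℂ :=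
  -(I * ((Real.sqrt (DeltaTheta a Λ θ) * (Real.sin θ)⁻¹ : ℝ) : ℂ)) +
    ((a * Real.sin θ / Real.sqrt (DeltaTheta a Λ θ) * (Λ * a / 3) : ℝ) : ℂ) * (-I)
def cX (a Λ : ℝ) (θ : ℝ) : ℂ :=
  ((a * Real.sin θ / Real.sqrt (DeltaTheta a Λ θ) * (1 + Λ * a ^ 2 / 3) : ℝ) : ℂ) * (-I)
def cM (m a : ℝ) (θ : ℝ) : ℂ := ((m * a * Real.cos θ : ℝ) : ℂ)

lemma contDiffOn_cT (hLor : Λ * a ^ 2 > -3) :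
    ContDiffOn ℝ (⊤ : ℕ∞) (cT a Λ) (Set.Ioo 0 Real.pi) :=
  contDiffOn_const.mul (contDiffOn_ofReal (contDiffOn_sqrtDelta hLor))

lemma contDiffOn_c0x (hLor : Λ * a ^ 2 > -3) :
    ContDiffOn ℝ (⊤ : ℕ∞) (c0x a Λ) (Set.Ioo 0 Real.pi) := by
  apply ContDiffOn.add
  · apply contDiffOn_const.mul (contDiffOn_ofReal _)
    apply (contDiffOn_sqrtDelta hLor).mul
    apply ContDiffOn.div_const
    exact Real.contDiff_cos.contDiffOn.div Real.contDiff_sin.contDiffOn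
      (fun θ hθ => sin_ne_of_mem hθ)
  · apply contDiffOn_const.mul (contDiffOn_ofReal _)
    apply ContDiffOn.div
    · rw [deriv_DeltaTheta]
      exact (contDiff_const.mul ((contDiff_const.mul Real.contDiff_cos).mul
        Real.contDiff_sin.neg)).contDiffOn
    · exact contDiffOn_const.mul (contDiffOn_sqrtDelta hLor)
    · intro θ hθ
      simpa using sqrtDelta_ne hLor θ

lemma contDiffOn_cP (hLor : Λ * a ^ 2 > -3) :
    ContDiffOn ℝ (⊤ : ℕ∞) (cP a Λ) (Set.Ioo 0 Real.pi) := by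
  apply ContDiffOn.add
  · apply ContDiffOn.neg
    apply contDiffOn_const.mul (contDiffOn_ofReal _)
    exact (contDiffOn_sqrtDelta hLor).mul
      (Real.contDiff_sin.contDiffOn.inv (fun θ hθ => sin_ne_of_mem hθ))
  · apply ContDiffOn.mul _ contDiffOn_const
    apply contDiffOn_ofReal
    apply ContDiffOn.mul _ contDiffOn_const
    exact (contDiffOn_const.mul Real.contDiff_sin.contDiffOn).div
      (contDiffOn_sqrtDelta hLor) (fun θ _ => sqrtDelta_ne hLor θ)

lemma contDiffOn_cX (hLor : Λ * a ^ 2 > -3) :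
    ContDiffOn ℝ (⊤ : ℕ∞) (cX a Λ) (Set.Ioo 0 Real.pi) := by
  apply ContDiffOn.mul _ contDiffOn_const
  apply contDiffOn_ofReal
  apply ContDiffOn.mul _ contDiffOn_const
  exact (contDiffOn_const.mul Real.contDiff_sin.contDiffOn).div
    (contDiffOn_sqrtDelta hLor) (fun θ _ => sqrtDelta_ne hLor θ)

lemma contDiffOn_cM (m a : ℝ) : ContDiffOn ℝ (⊤ : ℕ∞) (cM m a) (Set.Ioo 0 Real.pi) :=
  contDiffOn_ofReal (contDiffOn_const.mul Real.contDiff_cos.contDiffOn)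

def Acan (a Λ m : ℝ) (f : ℝ × ℝ × ℝ → E4) (p : ℝ × ℝ × ℝ) : E4 :=
  cT a Λ p.2.1 • GammaX.mulVec (pdT f p) + c0x a Λ p.2.1 • GammaX.mulVec (f p) +
    cP a Λ p.2.1 • GammaY.mulVec (pdP f p) + cX a Λ p.2.1 • GammaY.mulVec (pdX f p) +
    cM m a p.2.1 • Mplus.mulVec (f p)

lemma Aop_eq_Acan : Aop a Λ m f = Acan a Λ m f := by
  funext p
  simp only [Aop, slcalD, slD, H1op, DX, DP, Acan, cT, c0x, cP, cX, cM,
    Matrix.mulVec_add, Matrix.mulVec_smul, smul_add, smul_smul, smul_sub,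
    sub_eq_add_neg, smul_neg]
  push_cast
  module

lemma Sm.Acan (hLor : Λ * a ^ 2 > -3) (hf : Sm f) : Sm (Stmt17.Acan a Λ m f) :=
  ((((Sm.coef _ (contDiffOn_cT hLor) (hf.pdT.mulVec GammaX)).add
      (Sm.coef _ (contDiffOn_c0x hLor) (hf.mulVec GammaX))).add
      (Sm.coef _ (contDiffOn_cP hLor) (hf.pdP.mulVec GammaY))).add
      (Sm.coef _ (contDiffOn_cX hLor) (hf.pdX.mulVec GammaY))).add
      (Sm.coef _ (contDiffOn_cM m a) (hf.mulVec Mplus))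
/-! #### Canonical form of `H₀` and matrix identities -/

def cXc : ℂ := -I
def cPc (a r : ℝ) : ℂ := ((a / (r ^ 2 + a ^ 2) : ℝ) : ℂ) * (-I)
def c0c (a q Qc r : ℝ) : ℂ := -((q * Qc * r / (r ^ 2 + a ^ 2) : ℝ) : ℂ)

def Sc (a q Qc r : ℝ) (f : ℝ × ℝ × ℝ → E4) (p : ℝ × ℝ × ℝ) : E4 :=
  cXc • pdX f p + cPc a r • pdP f p + c0c a q Qc r • f p

lemma H0_eq : H0op a q Qc r f = fun p => -(GammaZ.mulVec (Sc a q Qc r f p)) := by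
  funext p
  simp only [H0op, DX, DP, Sc, cXc, cPc, c0c, Matrix.mulVec_add, Matrix.mulVec_smul,
    Matrix.mulVec_sub, sub_eq_add_neg, Matrix.mulVec_neg, smul_smul, smul_neg]
  module

lemma Sm.Sc (hf : Sm f) : Sm (Stmt17.Sc a q Qc r f) :=
  ((Sm.csmul cXc hf.pdX).add (Sm.csmul (cPc a r) hf.pdP)).add
    (Sm.csmul (c0c a q Qc r) hf)

lemma Sm.H0 (hf : Sm f) : Sm (H0op a q Qc r f) := by
  rw [H0_eq]
  exact (hf.Sc.mulVec GammaZ).neg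

lemma mXZ : GammaX * GammaZ = -(GammaZ * GammaX) := by
  ext i j; fin_cases i <;> fin_cases j <;>
    simp [GammaX, GammaZ, Matrix.mul_apply, Fin.sum_univ_four, Matrix.neg_apply,
      Matrix.vecHead, Matrix.vecTail]
lemma mYZ : GammaY * GammaZ = -(GammaZ * GammaY) := by
  ext i j; fin_cases i <;> fin_cases j <;>
    simp [GammaY, GammaZ, Matrix.mul_apply, Fin.sum_univ_four, Matrix.neg_apply,
      Matrix.vecHead, Matrix.vecTail]
lemma mMZ : Mplus * GammaZ = -(GammaZ * Mplus) := by
  ext i j; fin_cases i <;> fin_cases j <;>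
    simp [Mplus, GammaZ, Matrix.mul_apply, Fin.sum_univ_four, Matrix.neg_apply,
      Matrix.vecHead, Matrix.vecTail]
lemma mXM : GammaX * Mminus = -(Mminus * GammaX) := by
  ext i j; fin_cases i <;> fin_cases j <;>
    simp [GammaX, Mminus, Matrix.mul_apply, Fin.sum_univ_four, Matrix.neg_apply,
      Matrix.vecHead, Matrix.vecTail]
lemma mYM : GammaY * Mminus = -(Mminus * GammaY) := by
  ext i j; fin_cases i <;> fin_cases j <;>
    simp [GammaY, Mminus, Matrix.mul_apply, Fin.sum_univ_four, Matrix.neg_apply,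
      Matrix.vecHead, Matrix.vecTail]
lemma mMM : Mplus * Mminus = -(Mminus * Mplus) := by
  ext i j; fin_cases i <;> fin_cases j <;>
    simp [Mplus, Mminus, Matrix.mul_apply, Fin.sum_univ_four, Matrix.neg_apply,
      Matrix.vecHead, Matrix.vecTail]

/-! #### Derivatives of the canonical operators -/

lemma pdT_Sc (hf : Sm f) (hp : p ∈ UU) :
    pdT (Sc a q Qc r f) p =
      cXc • pdX (pdT f) p + cPc a r • pdP (pdT f) p + c0c a q Qc r • pdT f p := by
  have d0 := hf.diffAt hp
  have dX := hf.pdX.diffAt hp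
  have dP := hf.pdP.diffAt hp
  show pdT (fun z => cXc • pdX f z + cPc a r • pdP f z + c0c a q Qc r • f z) p = _
  rw [pdT_add ((dX.fun_const_smul cXc).fun_add (dP.fun_const_smul (cPc a r))) (d0.fun_const_smul _),
    pdT_add (dX.fun_const_smul cXc) (dP.fun_const_smul (cPc a r)),
    pdT_smul _ dX, pdT_smul _ dP, pdT_smul _ d0,
    pdT_pdX hf hp, pdT_pdP hf hp]

lemma pdP_Sc (hf : Sm f) (hp : p ∈ UU) :
    pdP (Sc a q Qc r f) p =
      cXc • pdX (pdP f) p + cPc a r • pdP (pdP f) p + c0c a q Qc r • pdP f p := by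
  have d0 := hf.diffAt hp
  have dX := hf.pdX.diffAt hp
  have dP := hf.pdP.diffAt hp
  show pdP (fun z => cXc • pdX f z + cPc a r • pdP f z + c0c a q Qc r • f z) p = _
  rw [pdP_add ((dX.fun_const_smul cXc).fun_add (dP.fun_const_smul (cPc a r))) (d0.fun_const_smul _),
    pdP_add (dX.fun_const_smul cXc) (dP.fun_const_smul (cPc a r)),
    pdP_smul _ dX, pdP_smul _ dP, pdP_smul _ d0,
    pdP_pdX hf hp]

lemma pdX_Sc (hf : Sm f) (hp : p ∈ UU) :
    pdX (Sc a q Qc r f) p =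
      cXc • pdX (pdX f) p + cPc a r • pdX (pdP f) p + c0c a q Qc r • pdX f p := by
  have d0 := hf.diffAt hp
  have dX := hf.pdX.diffAt hp
  have dP := hf.pdP.diffAt hp
  show pdX (fun z => cXc • pdX f z + cPc a r • pdP f z + c0c a q Qc r • f z) p = _
  rw [pdX_add ((dX.fun_const_smul cXc).fun_add (dP.fun_const_smul (cPc a r))) (d0.fun_const_smul _),
    pdX_add (dX.fun_const_smul cXc) (dP.fun_const_smul (cPc a r)),
    pdX_smul _ dX, pdX_smul _ dP, pdX_smul _ d0]

lemma coef_diffAt {c : ℝ → ℂ} (hc : ContDiffOn ℝ (⊤ : ℕ∞) c (Set.Ioo 0 Real.pi)) (hp : p ∈ UU) :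
    DifferentiableAt ℝ (fun z : ℝ × ℝ × ℝ => c z.2.1) p := by
  have hθ : p.2.1 ∈ Set.Ioo 0 Real.pi := by
    simp only [UU, Set.mem_prod] at hp; exact hp.2.1
  have h1 : DifferentiableAt ℝ c p.2.1 :=
    (hc.differentiableOn (by simp)).differentiableAt (isOpen_Ioo.mem_nhds hθ)
  exact h1.comp p (differentiableAt_snd.fst)

lemma pdX_Acan (hLor : Λ * a ^ 2 > -3) (hf : Sm f) (hp : p ∈ UU) :
    pdX (Acan a Λ m f) p =
      cT a Λ p.2.1 • GammaX.mulVec (pdX (pdT f) p) +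
        c0x a Λ p.2.1 • GammaX.mulVec (pdX f p) +
        cP a Λ p.2.1 • GammaY.mulVec (pdX (pdP f) p) +
        cX a Λ p.2.1 • GammaY.mulVec (pdX (pdX f) p) +
        cM m a p.2.1 • Mplus.mulVec (pdX f p) := by
  have d0 := hf.diffAt hp
  have dX := hf.pdX.diffAt hp
  have dP := hf.pdP.diffAt hp
  have dT := hf.pdT.diffAt hp
  have m1 : DifferentiableAt ℝ (fun z => GammaX.mulVec (pdT f z)) p :=
    ((mulVecCLM GammaX).differentiableAt).comp p dT
  have m2 : DifferentiableAt ℝ (fun z => GammaX.mulVec (f z)) p :=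
    ((mulVecCLM GammaX).differentiableAt).comp p d0
  have m3 : DifferentiableAt ℝ (fun z => GammaY.mulVec (pdP f z)) p :=
    ((mulVecCLM GammaY).differentiableAt).comp p dP
  have m4 : DifferentiableAt ℝ (fun z => GammaY.mulVec (pdX f z)) p :=
    ((mulVecCLM GammaY).differentiableAt).comp p dX
  have m5 : DifferentiableAt ℝ (fun z => Mplus.mulVec (f z)) p :=
    ((mulVecCLM Mplus).differentiableAt).comp p d0
  have t1 : DifferentiableAt ℝ (fun z => cT a Λ z.2.1 • GammaX.mulVec (pdT f z)) p :=
    (coef_diffAt (contDiffOn_cT hLor) hp).smul m1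
  have t2 : DifferentiableAt ℝ (fun z => c0x a Λ z.2.1 • GammaX.mulVec (f z)) p :=
    (coef_diffAt (contDiffOn_c0x hLor) hp).smul m2
  have t3 : DifferentiableAt ℝ (fun z => cP a Λ z.2.1 • GammaY.mulVec (pdP f z)) p :=
    (coef_diffAt (contDiffOn_cP hLor) hp).smul m3
  have t4 : DifferentiableAt ℝ (fun z => cX a Λ z.2.1 • GammaY.mulVec (pdX f z)) p :=
    (coef_diffAt (contDiffOn_cX hLor) hp).smul m4
  have t5 : DifferentiableAt ℝ (fun z => cM m a z.2.1 • Mplus.mulVec (f z)) p :=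
    (coef_diffAt (contDiffOn_cM m a) hp).smul m5
  show pdX (fun z =>
      cT a Λ z.2.1 • GammaX.mulVec (pdT f z) + c0x a Λ z.2.1 • GammaX.mulVec (f z) +
      cP a Λ z.2.1 • GammaY.mulVec (pdP f z) + cX a Λ z.2.1 • GammaY.mulVec (pdX f z) +
      cM m a z.2.1 • Mplus.mulVec (f z)) p = _
  rw [pdX_add (((t1.fun_add t2).fun_add t3).fun_add t4) t5, pdX_add ((t1.fun_add t2).fun_add t3) t4,
    pdX_add (t1.fun_add t2) t3, pdX_add t1 t2,
    pdX_coef _ m1, pdX_coef _ m2, pdX_coef _ m3, pdX_coef _ m4, pdX_coef _ m5,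
    pdX_mulVec _ dT, pdX_mulVec _ d0, pdX_mulVec _ dP, pdX_mulVec _ dX, pdX_mulVec Mplus d0]

lemma pdP_Acan (hLor : Λ * a ^ 2 > -3) (hf : Sm f) (hp : p ∈ UU) :
    pdP (Acan a Λ m f) p =
      cT a Λ p.2.1 • GammaX.mulVec (pdP (pdT f) p) +
        c0x a Λ p.2.1 • GammaX.mulVec (pdP f p) +
        cP a Λ p.2.1 • GammaY.mulVec (pdP (pdP f) p) +
        cX a Λ p.2.1 • GammaY.mulVec (pdX (pdP f) p) +
        cM m a p.2.1 • Mplus.mulVec (pdP f p) := by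
  have d0 := hf.diffAt hp
  have dX := hf.pdX.diffAt hp
  have dP := hf.pdP.diffAt hp
  have dT := hf.pdT.diffAt hp
  have m1 : DifferentiableAt ℝ (fun z => GammaX.mulVec (pdT f z)) p :=
    ((mulVecCLM GammaX).differentiableAt).comp p dT
  have m2 : DifferentiableAt ℝ (fun z => GammaX.mulVec (f z)) p :=
    ((mulVecCLM GammaX).differentiableAt).comp p d0
  have m3 : DifferentiableAt ℝ (fun z => GammaY.mulVec (pdP f z)) p :=
    ((mulVecCLM GammaY).differentiableAt).comp p dP
  have m4 : DifferentiableAt ℝ (fun z => GammaY.mulVec (pdX f z)) p :=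
    ((mulVecCLM GammaY).differentiableAt).comp p dX
  have m5 : DifferentiableAt ℝ (fun z => Mplus.mulVec (f z)) p :=
    ((mulVecCLM Mplus).differentiableAt).comp p d0
  have t1 : DifferentiableAt ℝ (fun z => cT a Λ z.2.1 • GammaX.mulVec (pdT f z)) p :=
    (coef_diffAt (contDiffOn_cT hLor) hp).smul m1
  have t2 : DifferentiableAt ℝ (fun z => c0x a Λ z.2.1 • GammaX.mulVec (f z)) p :=
    (coef_diffAt (contDiffOn_c0x hLor) hp).smul m2
  have t3 : DifferentiableAt ℝ (fun z => cP a Λ z.2.1 • GammaY.mulVec (pdP f z)) p :=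
    (coef_diffAt (contDiffOn_cP hLor) hp).smul m3
  have t4 : DifferentiableAt ℝ (fun z => cX a Λ z.2.1 • GammaY.mulVec (pdX f z)) p :=
    (coef_diffAt (contDiffOn_cX hLor) hp).smul m4
  have t5 : DifferentiableAt ℝ (fun z => cM m a z.2.1 • Mplus.mulVec (f z)) p :=
    (coef_diffAt (contDiffOn_cM m a) hp).smul m5
  show pdP (fun z =>
      cT a Λ z.2.1 • GammaX.mulVec (pdT f z) + c0x a Λ z.2.1 • GammaX.mulVec (f z) +
      cP a Λ z.2.1 • GammaY.mulVec (pdP f z) + cX a Λ z.2.1 • GammaY.mulVec (pdX f z) +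
      cM m a z.2.1 • Mplus.mulVec (f z)) p = _
  rw [pdP_add (((t1.fun_add t2).fun_add t3).fun_add t4) t5, pdP_add ((t1.fun_add t2).fun_add t3) t4,
    pdP_add (t1.fun_add t2) t3, pdP_add t1 t2,
    pdP_coef _ m1, pdP_coef _ m2, pdP_coef _ m3, pdP_coef _ m4, pdP_coef _ m5,
    pdP_mulVec _ dT, pdP_mulVec _ d0, pdP_mulVec _ dP, pdP_mulVec _ dX,
    pdP_mulVec Mplus d0, pdP_pdX hf hp]

/-! #### Anticommutation relations -/

lemma anticomm_M (hf : Sm f) (hp : p ∈ UU) :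
    Acan a Λ m (fun z => Mminus.mulVec (f z)) p = -(Mminus.mulVec (Acan a Λ m f p)) := by
  have d0 := hf.diffAt hp
  simp only [Acan]
  rw [pdT_mulVec _ d0, pdP_mulVec _ d0, pdX_mulVec _ d0]
  simp only [Matrix.mulVec_mulVec, mXM, mYM, mMM, Matrix.neg_mulVec, Matrix.mulVec_add,
    Matrix.mulVec_smul, smul_neg, neg_add]

lemma anticomm_H0 (hLor : Λ * a ^ 2 > -3) (hf : Sm f) (hp : p ∈ UU) :
    Acan a Λ m (H0op a q Qc r f) p = -(H0op a q Qc r (Acan a Λ m f) p) := by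
  have dSc := (hf.Sc (a := a) (q := q) (Qc := Qc) (r := r)).diffAt hp
  have dGzSc : DifferentiableAt ℝ (fun z => GammaZ.mulVec (Sc a q Qc r f z)) p :=
    (mulVecCLM GammaZ).differentiableAt.comp p dSc
  have hT : pdT (H0op a q Qc r f) p =
      -(GammaZ.mulVec (cXc • pdX (pdT f) p + cPc a r • pdP (pdT f) p +
        c0c a q Qc r • pdT f p)) := by
    rw [H0_eq]
    show pdT (fun z => -(GammaZ.mulVec (Sc a q Qc r f z))) p = _
    rw [pdT_neg dGzSc, pdT_mulVec _ dSc, pdT_Sc hf hp]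
  have hP : pdP (H0op a q Qc r f) p =
      -(GammaZ.mulVec (cXc • pdX (pdP f) p + cPc a r • pdP (pdP f) p +
        c0c a q Qc r • pdP f p)) := by
    rw [H0_eq]
    show pdP (fun z => -(GammaZ.mulVec (Sc a q Qc r f z))) p = _
    rw [pdP_neg dGzSc, pdP_mulVec _ dSc, pdP_Sc hf hp]
  have hX : pdX (H0op a q Qc r f) p =
      -(GammaZ.mulVec (cXc • pdX (pdX f) p + cPc a r • pdX (pdP f) p +
        c0c a q Qc r • pdX f p)) := by
    rw [H0_eq]
    show pdX (fun z => -(GammaZ.mulVec (Sc a q Qc r f z))) p = _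
    rw [pdX_neg dGzSc, pdX_mulVec _ dSc, pdX_Sc hf hp]
  have hRHS : H0op a q Qc r (Acan a Λ m f) p =
      -(GammaZ.mulVec (Sc a q Qc r (Acan a Λ m f) p)) := by rw [H0_eq]
  have h0 : H0op a q Qc r f p = -(GammaZ.mulVec (Sc a q Qc r f p)) := by rw [H0_eq]
  simp only [Acan] at hRHS ⊢
  rw [hT, hP, hX, hRHS, h0]
  simp only [Sc, pdX_Acan hLor hf hp, pdP_Acan hLor hf hp, Acan]
  simp only [Matrix.mulVec_add, Matrix.mulVec_smul, Matrix.mulVec_neg, smul_neg, neg_neg,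
    Matrix.mulVec_mulVec, mXZ, mYZ, mMZ, Matrix.neg_mulVec, smul_add, smul_smul, neg_add]
  module

/-! #### Linearity and locality of `Acan` -/

lemma Acan_add (hf : DifferentiableAt ℝ f p) (hg : DifferentiableAt ℝ g p) :
    Acan a Λ m (fun z => f z + g z) p = Acan a Λ m f p + Acan a Λ m g p := by
  simp only [Acan, pdT_add hf hg, pdP_add hf hg, pdX_add hf hg, Matrix.mulVec_add, smul_add]
  module

lemma Acan_smul (c : ℂ) (hf : DifferentiableAt ℝ f p) :
    Acan a Λ m (fun z => c • f z) p = c • Acan a Λ m f p := by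
  simp only [Acan, pdT_smul c hf, pdP_smul c hf, pdX_smul c hf, Matrix.mulVec_smul,
    smul_add, smul_smul]
  module

lemma Acan_neg (hf : DifferentiableAt ℝ f p) :
    Acan a Λ m (fun z => -(f z)) p = -(Acan a Λ m f p) := by
  simp only [Acan, pdT_neg hf, pdP_neg hf, pdX_neg hf, Matrix.mulVec_neg, smul_neg, neg_add]

lemma Acan_congr (h : f =ᶠ[nhds p] g) : Acan a Λ m f p = Acan a Λ m g p := by
  simp only [Acan, pdT_congr h, pdP_congr h, pdX_congr h, h.self_of_nhds]

/-! #### Decomposition of the Hamiltonian -/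

variable {ftilde : ℝ}

lemma Hop_decomp : Hop a Λ m q Qc r ftilde f = fun z =>
    H0op a q Qc r f z + ((ftilde : ℝ) : ℂ) •
      (Acan a Λ m f z + (I * ((m * r : ℝ) : ℂ)) • Mminus.mulVec (f z)) := by
  funext z
  rw [← Aop_eq_Acan]
  simp only [Hop, Aop, M0op]
  module

/-! #### Main commutation lemma -/

lemma main (hLor : Λ * a ^ 2 > -3) {psi : ℝ × ℝ × ℝ → E4} (hψ : Sm psi) (hp : p ∈ UU) :
    Qop a Λ m (Hop a Λ m q Qc r ftilde psi) p =
      Hop a Λ m q Qc r ftilde (Qop a Λ m psi) p := by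
  have SmA1 : Sm (Acan a Λ m psi) := hψ.Acan hLor
  have SmA2 : Sm (Acan a Λ m (Acan a Λ m psi)) := SmA1.Acan hLor
  have SmH0 : Sm (H0op a q Qc r psi) := hψ.H0
  have SmH0A1 : Sm (H0op a q Qc r (Acan a Λ m psi)) := SmA1.H0
  have SmM : Sm (fun z => Mminus.mulVec (psi z)) := hψ.mulVec Mminus
  have SmMA1 : Sm (fun z => Mminus.mulVec (Acan a Λ m psi z)) := SmA1.mulVec Mminus
  have SmG : Sm (fun z => Acan a Λ m psi z +
      (I * ((m * r : ℝ) : ℂ)) • Mminus.mulVec (psi z)) :=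
    SmA1.add (Sm.csmul _ SmM)
  -- value of `A (H ψ)` on the strip
  have h1 : ∀ z ∈ UU, Acan a Λ m (Hop a Λ m q Qc r ftilde psi) z =
      -(H0op a q Qc r (Acan a Λ m psi) z) + ((ftilde : ℝ) : ℂ) •
        (Acan a Λ m (Acan a Λ m psi) z +
          (I * ((m * r : ℝ) : ℂ)) • -(Mminus.mulVec (Acan a Λ m psi z))) := by
    intro z hz
    have dG : DifferentiableAt ℝ (fun w => Acan a Λ m psi w +
        (I * ((m * r : ℝ) : ℂ)) • Mminus.mulVec (psi w)) z := SmG.diffAt hz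
    have dG2 : DifferentiableAt ℝ (fun w => ((ftilde : ℝ) : ℂ) •
        (Acan a Λ m psi w + (I * ((m * r : ℝ) : ℂ)) • Mminus.mulVec (psi w))) z :=
      dG.fun_const_smul _
    have dM : DifferentiableAt ℝ (fun w => (I * ((m * r : ℝ) : ℂ)) •
        Mminus.mulVec (psi w)) z := (SmM.diffAt hz).fun_const_smul _
    rw [Hop_decomp, Acan_add (SmH0.diffAt hz) dG2, Acan_smul _ dG,
      Acan_add (SmA1.diffAt hz) dM, Acan_smul _ (SmM.diffAt hz),
      anticomm_M hψ hz, anticomm_H0 hLor hψ hz]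
  have hev : Acan a Λ m (Hop a Λ m q Qc r ftilde psi) =ᶠ[nhds p]
      (fun z => -(H0op a q Qc r (Acan a Λ m psi) z) + ((ftilde : ℝ) : ℂ) •
        (Acan a Λ m (Acan a Λ m psi) z +
          (I * ((m * r : ℝ) : ℂ)) • -(Mminus.mulVec (Acan a Λ m psi z)))) := by
    filter_upwards [isOpen_UU.mem_nhds hp] with z hz using h1 z hz
  have dMA1neg : DifferentiableAt ℝ
      (fun z => -(Mminus.mulVec (Acan a Λ m psi z))) p := (SmMA1.diffAt hp).neg
  have d3 : DifferentiableAt ℝ (fun z => (I * ((m * r : ℝ) : ℂ)) •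
      -(Mminus.mulVec (Acan a Λ m psi z))) p := dMA1neg.fun_const_smul _
  have d2 : DifferentiableAt ℝ (fun z => Acan a Λ m (Acan a Λ m psi) z +
      (I * ((m * r : ℝ) : ℂ)) • -(Mminus.mulVec (Acan a Λ m psi z))) p :=
    (SmA2.diffAt hp).add d3
  have d2' : DifferentiableAt ℝ (fun z => ((ftilde : ℝ) : ℂ) •
      (Acan a Λ m (Acan a Λ m psi) z +
        (I * ((m * r : ℝ) : ℂ)) • -(Mminus.mulVec (Acan a Λ m psi z)))) p :=
    d2.fun_const_smul _
  have d1 : DifferentiableAt ℝ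
      (fun z => -(H0op a q Qc r (Acan a Λ m psi) z)) p := (SmH0A1.diffAt hp).neg
  simp only [Qop, Aop_eq_Acan]
  rw [Acan_congr hev, Acan_add d1 d2', Acan_neg (SmH0A1.diffAt hp),
    anticomm_H0 hLor SmA1 hp, Acan_smul _ d2, Acan_add (SmA2.diffAt hp) d3,
    Acan_smul _ dMA1neg, Acan_neg (SmMA1.diffAt hp), anticomm_M SmA1 hp,
    Hop_decomp]
  simp only [neg_neg]

end Stmt17

/-! ### The main theorem -/

/-- the symmetry operator `Q` commutes with the Dirac
Hamiltonian `H` on smooth bispinors on `ℝ × (0,π) × ℝ`. -/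
theorem stmt17 (a Λ m q Qc r ftilde : ℝ) (hLor : Λ * a ^ 2 > -3)
    (hr : r ^ 2 + a ^ 2 ≠ 0) (psi : ℝ × ℝ × ℝ → Fin 4 → ℂ)
    (hpsi : ContDiffOn ℝ (⊤ : ℕ∞) psi
      ((Set.univ : Set ℝ) ×ˢ Set.Ioo 0 Real.pi ×ˢ (Set.univ : Set ℝ))) :
    ∀ p ∈ (Set.univ : Set ℝ) ×ˢ Set.Ioo 0 Real.pi ×ˢ (Set.univ : Set ℝ),
      Qop a Λ m (Hop a Λ m q Qc r ftilde psi) p =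
        Hop a Λ m q Qc r ftilde (Qop a Λ m psi) p := by
  intro p hp
  exact Stmt17.main hLor hpsi hp

end
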